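/- Let R' be a (0,1)-form and let L₁,…,L_a be pairwise non-proportional (1,0)-forms in R = k[x₀,x₁,y₀,y₁], and let n₁,…,n_a be positive integers. If F ∈ R is bihomogeneous of bidegree (c,d), F ∈ (L_s,R')^{n_s} for every s = 1,…,a, and c < n₁ + n₂ + ⋯ + n_a, then R' divides F. -/

import Mathlib

open MvPolynomial

/-- `F` is bihomogeneous of bidegree `(c, d)` in `k[x₀,x₁,y₀,y₁]`, where the variables are
indexed by `Fin 4` with `x₀ = X 0`, `x₁ = X 1`, `y₀ = X 2`, `y₁ = X 3`. -/
def IsBihom {k : Type*} [CommSemiring k] (c d : ℕ) (F : MvPolynomial (Fin 4) k) : Prop :=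
  ∀ s ∈ F.support, s 0 + s 1 = c ∧ s 2 + s 3 = d

/-- Two polynomials are non-proportional: neither is a scalar multiple of the other. -/
def NonPropPoly {k : Type*} [CommSemiring k] (F G : MvPolynomial (Fin 4) k) : Prop :=
  (∀ c : k, F ≠ c • G) ∧ (∀ c : k, G ≠ c • F)

/-!
Write `R' = α y₀ + β y₁` and specialise `y ↦ (β, -α)`, a point of the line `R' = 0`. This kills
`R'` and fixes every `L_s`, so the specialisation `F(x, β, -α)` is divisible by each `L_s ^ n_s`,
hence by their product, as the `L_s` are pairwise non-associated primes. That product is a binary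
form of degree `∑ n_s > c`, while `F(x, β, -α)` is homogeneous of degree `c`; so
`F(x, β, -α) = 0`. Since `F` is homogeneous in `y`, it then vanishes on the whole line `R' = 0`,
i.e. `R' ∣ F`.
-/

theorem Ideal.pow_map_dvd_map_of_mem_span_pair_pow {R S : Type*} [CommSemiring R]
    [CommSemiring S] (f : R →+* S) {x y z : R} {n : ℕ} (hy : f y = 0)
    (hz : z ∈ Ideal.span {x, y} ^ n) : f x ^ n ∣ f z := by
  have := Ideal.mem_map_of_mem f hz
  rwa [Ideal.map_pow, Ideal.map_span, Set.image_pair, hy, Set.pair_comm, Ideal.span_insert_zero,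
    Ideal.span_singleton_pow, Ideal.mem_span_singleton] at this

namespace MvPolynomial

section WeightedHomogeneous

variable {σ R : Type*} [CommSemiring R] {w : σ → ℕ} {p : MvPolynomial σ R} {d : ℕ}

theorem IsWeightedHomogeneous.aeval_pow_mul {A : Type*} [CommSemiring A] [Algebra R A]
    (hp : p.IsWeightedHomogeneous w d) (f : σ → A) (t : A) :
    aeval (fun i ↦ t ^ w i * f i) p = t ^ d * aeval f p := by
  induction hp using IsWeightedHomogeneous.induction_on with
  | zero => simp
  | add p q _ _ hp hq => simp [hp, hq, mul_add]
  | monomial m r hm =>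
    have hpow : (m.prod fun i e ↦ (t ^ w i) ^ e) = t ^ Finsupp.weight w m := by
      simp only [Finsupp.prod, Finsupp.weight_apply, Finsupp.sum, ← pow_mul, smul_eq_mul,
        mul_comm (m _), Finset.prod_pow_eq_pow_sum]
    simp only [aeval_monomial, mul_pow, Finsupp.prod_mul, hpow, ← hm]
    ring

theorem IsWeightedHomogeneous.isHomogeneous_aeval {τ : Type*}
    (hp : p.IsWeightedHomogeneous w d) {f : σ → MvPolynomial τ R}
    (hf : ∀ i, (f i).IsHomogeneous (w i)) : (aeval f p).IsHomogeneous d := by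
  induction hp using IsWeightedHomogeneous.induction_on with
  | zero => simpa using isHomogeneous_zero _ _ _
  | add p q _ _ hp hq => simpa using hp.add hq
  | monomial m r hm =>
    rw [aeval_monomial, ← hm, algebraMap_eq, Finsupp.weight_apply, Finsupp.sum]
    refine IsHomogeneous.C_mul (IsHomogeneous.prod _ _ _ fun i _ ↦ ?_) r
    simpa [mul_comm] using (hf i).pow (m i)

end WeightedHomogeneous

theorem X_sub_dvd_sub_aeval {σ R : Type*} [CommRing R] {f : σ → MvPolynomial σ R} {i : σ}
    (hf : ∀ j ≠ i, f j = X j) (p : MvPolynomial σ R) : X i - f i ∣ p - aeval f p := by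
  rw [← Ideal.mem_span_singleton, ← Ideal.Quotient.eq, ← Ideal.Quotient.mkₐ_eq_mk R,
    comp_aeval_apply]
  conv_lhs => rw [← aeval_X_left_apply p, comp_aeval_apply]
  congr 2
  funext j
  rcases eq_or_ne j i with rfl | hj
  · simp [Ideal.Quotient.eq]
  · rw [hf j hj]

section Field

variable {σ k : Type*} [Field k]

theorem irreducible_of_isHomogeneous_one {p : MvPolynomial σ k} (hp : p.IsHomogeneous 1)
    (hp0 : p ≠ 0) : Irreducible p := by
  refine irreducible_of_totalDegree_eq_one (hp.totalDegree hp0) fun x hx ↦ ?_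
  obtain ⟨m, hm⟩ := ne_zero_iff.mp hp0
  exact (ne_zero_of_dvd_ne_zero hm (hx m)).isUnit

theorem IsHomogeneous.exists_eq_smul_of_dvd {p q : MvPolynomial σ k} {n : ℕ}
    (hp : p.IsHomogeneous n) (hq : q.IsHomogeneous n) (hq0 : q ≠ 0) (h : p ∣ q) :
    ∃ c : k, q = c • p := by
  obtain ⟨r, rfl⟩ := h
  have hr : r.totalDegree = 0 := by
    have := totalDegree_mul_of_isDomain (left_ne_zero_of_mul hq0) (right_ne_zero_of_mul hq0)
    rw [hq.totalDegree hq0, hp.totalDegree (left_ne_zero_of_mul hq0)] at this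
    omega
  rw [totalDegree_eq_zero_iff_eq_C] at hr
  exact ⟨r.coeff 0, by rw [smul_eq_C_mul, mul_comm, ← hr]⟩

theorem isRelPrime_of_isHomogeneous_one {p q : MvPolynomial σ k} (hp : p.IsHomogeneous 1)
    (hp0 : p ≠ 0) (hq : q.IsHomogeneous 1) (hq0 : q ≠ 0) (hpq : ∀ c : k, q ≠ c • p) :
    IsRelPrime p q := by
  refine (irreducible_of_isHomogeneous_one hp hp0).isRelPrime_iff_not_dvd.mpr fun h ↦ ?_
  obtain ⟨c, hc⟩ := hp.exists_eq_smul_of_dvd hq hq0 h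
  exact hpq c hc

theorem IsHomogeneous.eq_zero_of_dvd_of_lt {p q : MvPolynomial σ k} {m n : ℕ}
    (hp : p.IsHomogeneous m) (hq : q.IsHomogeneous n) (hnm : n < m) (h : p ∣ q) : q = 0 := by
  by_contra hq0
  have := totalDegree_le_of_dvd_of_isDomain h hq0
  rw [hq.totalDegree hq0, hp.totalDegree (ne_zero_of_dvd_ne_zero hq0 h)] at this
  omega

end Field

end MvPolynomial

namespace IsBihom

variable {k : Type*} [CommSemiring k] {c d : ℕ} {F : MvPolynomial (Fin 4) k}

theorem isWeightedHomogeneous_fst (hF : IsBihom c d F) :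
    F.IsWeightedHomogeneous ![1, 1, 0, 0] c := fun m hm ↦ by
  simpa [Finsupp.weight_apply, Finsupp.sum_fintype, Fin.sum_univ_four] using
    (hF m (mem_support_iff.mpr hm)).1

theorem isWeightedHomogeneous_snd (hF : IsBihom c d F) :
    F.IsWeightedHomogeneous ![0, 0, 1, 1] d := fun m hm ↦ by
  simpa [Finsupp.weight_apply, Finsupp.sum_fintype, Fin.sum_univ_four] using
    (hF m (mem_support_iff.mpr hm)).2

theorem isHomogeneous (hF : IsBihom c d F) : F.IsHomogeneous (c + d) := fun m hm ↦ by
  obtain ⟨hc, hd⟩ := hF m (mem_support_iff.mpr hm)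
  simp only [Finsupp.weight_apply, Pi.one_apply, smul_eq_mul, mul_one, Finsupp.sum_fintype,
    Fin.sum_univ_four, implies_true]
  omega

theorem aeval_eq_self (hF : IsBihom c 0 F) (u v : MvPolynomial (Fin 4) k) :
    aeval ![X 0, X 1, u, v] F = F := by
  conv_rhs => rw [← aeval_X_left_apply F]
  refine eval₂_congr (f := algebraMap k (MvPolynomial (Fin 4) k)) _ _ ?_
  intro i m hi hm
  obtain ⟨-, hm⟩ := hF m (mem_support_iff.mpr hm)
  rw [Finsupp.mem_support_iff] at hi
  fin_cases i <;> simp_all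

theorem isHomogeneous_aeval (hF : IsBihom c d F) (u v : k) :
    (aeval (![X 0, X 1, C u, C v] : Fin 4 → MvPolynomial (Fin 4) k) F).IsHomogeneous c :=
  hF.isWeightedHomogeneous_fst.isHomogeneous_aeval fun i ↦ by
    fin_cases i
    exacts [isHomogeneous_X _ _, isHomogeneous_X _ _, isHomogeneous_C _ _, isHomogeneous_C _ _]

theorem eq_C_mul_X_add_C_mul_X (hF : IsBihom 0 1 F) :
    F = C (F.coeff (.single 2 1)) * X 2 + C (F.coeff (.single 3 1)) * X 3 := by
  ext m
  by_cases h2 : m = .single 2 1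
  · simp [h2, coeff_X, Finsupp.single_eq_single_iff]
  by_cases h3 : m = .single 3 1
  · simp [h3, coeff_X, Finsupp.single_eq_single_iff]
  simp only [coeff_add, coeff_C_mul, coeff_X, if_neg (Ne.symm h2), if_neg (Ne.symm h3),
    mul_zero, add_zero]
  by_contra hm
  obtain ⟨h01, h23⟩ := hF m (mem_support_iff.mpr hm)
  rcases Nat.add_eq_one_iff.mp h23 with ⟨h2', h3'⟩ | ⟨h2', h3'⟩
  · exact h3 (by ext i; fin_cases i <;> simp <;> omega)
  · exact h2 (by ext i; fin_cases i <;> simp <;> omega)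

end IsBihom

theorem C_mul_X_add_C_mul_X_dvd_of_aeval_eq_zero {k : Type*} [Field k] {d : ℕ}
    {F : MvPolynomial (Fin 4) k} (hF : F.IsWeightedHomogeneous ![0, 0, 1, 1] d) {α β : k}
    (hαβ : α ≠ 0 ∨ β ≠ 0)
    (h : aeval (![X 0, X 1, C β, C (-α)] : Fin 4 → MvPolynomial (Fin 4) k) F = 0) :
    C α * X 2 + C β * X 3 ∣ F := by
  have hline : ∀ t : MvPolynomial (Fin 4) k, aeval ![X 0, X 1, t * C β, t * C (-α)] F = 0 :=
    fun t ↦ calc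
      _ = aeval (fun i ↦ t ^ (![0, 0, 1, 1] : Fin 4 → ℕ) i * ![X 0, X 1, C β, C (-α)] i) F := by
          congr 2
          funext i
          fin_cases i <;> simp
      _ = 0 := by rw [hF.aeval_pow_mul, h, mul_zero]
  rcases ne_or_eq β 0 with hβ | rfl
  · have hX2 : (C β⁻¹ * X 2 * C β : MvPolynomial (Fin 4) k) = X 2 := by
      rw [mul_right_comm, ← C_mul, inv_mul_cancel₀ hβ, C_1, one_mul]
    have hf : ∀ j ≠ 3, (![X 0, X 1, C β⁻¹ * X 2 * C β, C β⁻¹ * X 2 * C (-α)] :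
        Fin 4 → MvPolynomial (Fin 4) k) j = X j := by
      intro j hj
      fin_cases j
      exacts [rfl, rfl, by simpa using hX2, absurd rfl hj]
    have hdvd := X_sub_dvd_sub_aeval hf F
    rw [hline, sub_zero] at hdvd
    calc (C α * X 2 + C β * X 3 : MvPolynomial (Fin 4) k)
        = C β * (X 3 - C β⁻¹ * X 2 * C (-α)) := by
          rw [mul_sub, ← mul_assoc, ← mul_assoc, ← C_mul, mul_inv_cancel₀ hβ, C_1, map_neg]
          ring
      _ ∣ F := (hβ.isUnit.map C).mul_left_dvd.mpr hdvd
  · have hα : α ≠ 0 := hαβ.resolve_right (not_not.mpr rfl)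
    have hX3 : (C (-α)⁻¹ * X 3 * C (-α) : MvPolynomial (Fin 4) k) = X 3 := by
      rw [mul_right_comm, ← C_mul, inv_mul_cancel₀ (neg_ne_zero.mpr hα), C_1, one_mul]
    have hf : ∀ j ≠ 2, (![X 0, X 1, C (-α)⁻¹ * X 3 * C 0, C (-α)⁻¹ * X 3 * C (-α)] :
        Fin 4 → MvPolynomial (Fin 4) k) j = X j := by
      intro j hj
      fin_cases j
      exacts [rfl, rfl, absurd rfl hj, by simpa using hX3]
    have hdvd := X_sub_dvd_sub_aeval hf F
    rw [hline, sub_zero] at hdvd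
    rw [C_0, zero_mul, add_zero, (hα.isUnit.map C).mul_left_dvd]
    simpa using hdvd

theorem bezout_against_vertical_line_general {k : Type*} [Field k]
    (a : ℕ) (R' : MvPolynomial (Fin 4) k) (hR0 : R' ≠ 0) (hRdeg : IsBihom 0 1 R')
    (L : Fin a → MvPolynomial (Fin 4) k)
    (hL0 : ∀ s, L s ≠ 0) (hLdeg : ∀ s, IsBihom 1 0 (L s))
    (hLnp : ∀ s t, s ≠ t → NonPropPoly (L s) (L t))
    (n : Fin a → ℕ)
    (c d : ℕ) (F : MvPolynomial (Fin 4) k) (hF : IsBihom c d F)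
    (hmem : ∀ s, F ∈ (Ideal.span {L s, R'}) ^ n s)
    (hc : c < ∑ s, n s) :
    R' ∣ F := by
  set α := R'.coeff (.single 2 1)
  set β := R'.coeff (.single 3 1)
  have hR' : R' = C α * X 2 + C β * X 3 := hRdeg.eq_C_mul_X_add_C_mul_X
  have hαβ : α ≠ 0 ∨ β ≠ 0 := by
    contrapose! hR0
    simp [hR', hR0]
  let φ : MvPolynomial (Fin 4) k →ₐ[k] MvPolynomial (Fin 4) k := aeval ![X 0, X 1, C β, C (-α)]
  have hφR' : φ R' = 0 := by
    rw [hR']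
    simp only [φ, map_add, map_mul, aeval_C, aeval_X, algebraMap_eq, Matrix.cons_val, C_neg]
    ring
  have hdvd (s : Fin a) : L s ^ n s ∣ φ F := by
    simpa only [AlgHom.toRingHom_eq_coe, RingHom.coe_coe, φ, (hLdeg s).aeval_eq_self] using
      Ideal.pow_map_dvd_map_of_mem_span_pair_pow φ.toRingHom hφR' (hmem s)
  have hcop : Pairwise (Function.onFun IsRelPrime fun s ↦ L s ^ n s) := fun s t hst ↦
    (isRelPrime_of_isHomogeneous_one (hLdeg s).isHomogeneous (hL0 s) (hLdeg t).isHomogeneous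
      (hL0 t) (hLnp s t hst).2).pow
  have hφF : φ F = 0 :=
    IsHomogeneous.eq_zero_of_dvd_of_lt
      (IsHomogeneous.prod _ _ _ fun s _ ↦ by simpa using (hLdeg s).isHomogeneous.pow (n s))
      (hF.isHomogeneous_aeval β (-α))
      hc (Fintype.prod_dvd_of_isRelPrime hcop hdvd)
  rw [hR']
  exact C_mul_X_add_C_mul_X_dvd_of_aeval_eq_zero hF.isWeightedHomogeneous_snd hαβ hφF

/-- **Bigraded Bezout with multiplicities against a `(0,1)`-line.**  Let `R'` be a
`(0,1)`-form and `L₁, …, L_a` pairwise non-proportional `(1,0)`-forms, and let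
`n₁, …, n_a` be positive integers.  If `F` is bihomogeneous of bidegree `(c, d)`,
`F ∈ (L_s, R')^(n_s)` for every `s`, and `c < n₁ + ⋯ + n_a`, then `R'` divides `F`. -/
theorem bezout_against_vertical_line {k : Type*} [Field k] [IsAlgClosed k] [CharZero k]
    (a : ℕ) (R' : MvPolynomial (Fin 4) k) (hR0 : R' ≠ 0) (hRdeg : IsBihom 0 1 R')
    (L : Fin a → MvPolynomial (Fin 4) k)
    (hL0 : ∀ s, L s ≠ 0) (hLdeg : ∀ s, IsBihom 1 0 (L s))
    (hLnp : ∀ s t, s ≠ t → NonPropPoly (L s) (L t))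
    (n : Fin a → ℕ) (hn : ∀ s, 1 ≤ n s)
    (c d : ℕ) (F : MvPolynomial (Fin 4) k) (hF : IsBihom c d F)
    (hmem : ∀ s, F ∈ (Ideal.span {L s, R'}) ^ n s)
    (hc : c < ∑ s, n s) :
    R' ∣ F :=
  bezout_against_vertical_line_general a R' hR0 hRdeg L hL0 hLdeg hLnp n c d F hF hmem hc
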